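/- For n ≥ 1 and every A ∈ Mₙ, the Frobenius distances to the two components of the orthogonal group satisfy ρ⁺(A) + ρ⁻(A) ≥ 2. -/

import Mathlib

open Matrix

attribute [local instance] Matrix.frobeniusNormedAddCommGroup Matrix.frobeniusNormedSpace

/-- Frobenius distance from `A` to the set of orthogonal matrices with determinant `1`. -/
noncomputable def rhoPlus {n : ℕ} (A : Matrix (Fin n) (Fin n) ℝ) : ℝ :=
  Metric.infDist A {Q : Matrix (Fin n) (Fin n) ℝ | Q * Qᵀ = 1 ∧ Q.det = 1}

/-- Frobenius distance from `A` to the set of orthogonal matrices with determinant `-1`. -/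
noncomputable def rhoMinus {n : ℕ} (A : Matrix (Fin n) (Fin n) ℝ) : ℝ :=
  Metric.infDist A {Q : Matrix (Fin n) (Fin n) ℝ | Q * Qᵀ = 1 ∧ Q.det = -1}

private lemma sq_norm_frob {n : ℕ} (A : Matrix (Fin n) (Fin n) ℝ) :
    ‖A‖ ^ 2 = ∑ i, ∑ j, (A i j) ^ 2 := by
  rw [Matrix.frobenius_norm_def, ← Real.rpow_natCast _ 2, ← Real.rpow_mul (by positivity)]
  norm_num

/-- L2 preserved by orthogonal matrix. -/
private lemma orth_preserve {n : ℕ} {Q : Matrix (Fin n) (Fin n) ℝ} (hQ : Q * Qᵀ = 1)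
    (v : Fin n → ℝ) : (Q *ᵥ v) ⬝ᵥ (Q *ᵥ v) = v ⬝ᵥ v := by
  have h' : Qᵀ * Q = 1 := mul_eq_one_comm.mp hQ
  rw [Matrix.dotProduct_mulVec, ← Matrix.vecMul_transpose, Matrix.vecMul_vecMul, h']
  simp

private lemma key {n : ℕ} {Q₁ Q₂ : Matrix (Fin n) (Fin n) ℝ}
    (h1 : Q₁ * Q₁ᵀ = 1) (d1 : Q₁.det = 1) (h2 : Q₂ * Q₂ᵀ = 1) (d2 : Q₂.det = -1) :
    2 ≤ dist Q₁ Q₂ := by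
  set Q := Q₁ᵀ * Q₂ with hQdef
  have h1' : Q₁ᵀ * Q₁ = 1 := mul_eq_one_comm.mp h1
  have hQ : Q * Qᵀ = 1 := by
    rw [hQdef, Matrix.transpose_mul, Matrix.transpose_transpose]
    calc Q₁ᵀ * Q₂ * (Q₂ᵀ * Q₁) = Q₁ᵀ * (Q₂ * Q₂ᵀ) * Q₁ := by noncomm_ring
      _ = 1 := by rw [h2, mul_one, h1']
  have hdet : Q.det = -1 := by
    rw [hQdef, Matrix.det_mul, Matrix.det_transpose, d1, d2]; ring
  -- det (1 + Q) = 0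
  have hdet0 : (1 + Q).det = 0 := by
    have : Q * (1 + Qᵀ) = Q + 1 := by rw [mul_add, mul_one, hQ]
    have h3 : Q.det * (1 + Qᵀ).det = (Q + 1).det := by rw [← Matrix.det_mul, this]
    have h4 : (1 + Qᵀ).det = (1 + Q).det := by
      rw [show (1 : Matrix (Fin n) (Fin n) ℝ) + Qᵀ = (1 + Q)ᵀ by simp, Matrix.det_transpose]
    rw [h4, hdet, add_comm Q 1] at h3
    linarith
  obtain ⟨v, hv0, hv⟩ := Matrix.exists_mulVec_eq_zero_iff.mpr hdet0
  have hQv : Q *ᵥ v = -v := by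
    have := hv
    rw [Matrix.add_mulVec, Matrix.one_mulVec] at this
    linear_combination (norm := module) this
  -- Q₂ v = - Q₁ v
  have h2v : Q₂ *ᵥ v = -(Q₁ *ᵥ v) := by
    have : Q₁ *ᵥ (Q *ᵥ v) = Q₁ *ᵥ (-v) := by rw [hQv]
    rw [Matrix.mulVec_mulVec, hQdef, ← mul_assoc, h1, one_mul] at this
    rw [this, Matrix.mulVec_neg]
  set M := Q₁ - Q₂ with hM
  have hMv : M *ᵥ v = (2 : ℝ) • (Q₁ *ᵥ v) := by
    rw [hM, Matrix.sub_mulVec, h2v]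
    module
  have hsv : (0:ℝ) < v ⬝ᵥ v := by
    have : v ⬝ᵥ v = ∑ i, (v i)^2 := by simp [dotProduct, sq]
    rw [this]
    rcases Function.ne_iff.mp hv0 with ⟨i, hi⟩
    have hvi : v i ≠ 0 := by simpa using hi
    have h0 : (0:ℝ) < (v i)^2 := by positivity
    exact lt_of_lt_of_le h0 (Finset.single_le_sum (f := fun j => (v j)^2)
      (fun j _ => by positivity) (Finset.mem_univ i))
  -- ‖Mv‖² ≤ ‖M‖² (v⬝v)  by Cauchy–Schwarz
  have hcs : (M *ᵥ v) ⬝ᵥ (M *ᵥ v) ≤ ‖M‖^2 * (v ⬝ᵥ v) := by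
    have : (M *ᵥ v) ⬝ᵥ (M *ᵥ v) = ∑ i, (∑ j, M i j * v j)^2 := by
      simp [dotProduct, Matrix.mulVec, sq]
    rw [this, sq_norm_frob, Finset.sum_mul]
    apply Finset.sum_le_sum
    intro i _
    calc (∑ j, M i j * v j)^2 ≤ (∑ j, (M i j)^2) * (∑ j, (v j)^2) :=
          Finset.sum_mul_sq_le_sq_mul_sq _ _ _
      _ = (∑ j, (M i j)^2) * (v ⬝ᵥ v) := by simp [dotProduct, sq]
  have hlhs : (M *ᵥ v) ⬝ᵥ (M *ᵥ v) = 4 * (v ⬝ᵥ v) := by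
    rw [hMv]
    have : ((2:ℝ) • (Q₁ *ᵥ v)) ⬝ᵥ ((2:ℝ) • (Q₁ *ᵥ v)) = 4 * ((Q₁ *ᵥ v) ⬝ᵥ (Q₁ *ᵥ v)) := by
      simp [dotProduct, Finset.mul_sum]; ring_nf
    rw [this, orth_preserve h1 v]
  have h4le : 4 ≤ ‖M‖^2 := by
    rw [hlhs] at hcs
    nlinarith
  have : 2 ≤ ‖M‖ := by nlinarith [norm_nonneg M]
  rwa [dist_eq_norm]

theorem stmt10 {n : ℕ} (hn : 1 ≤ n) (A : Matrix (Fin n) (Fin n) ℝ) :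
    2 ≤ rhoPlus A + rhoMinus A := by
  haveI : NeZero n := ⟨by omega⟩
  set Sp := {Q : Matrix (Fin n) (Fin n) ℝ | Q * Qᵀ = 1 ∧ Q.det = 1} with hSp
  set Sm := {Q : Matrix (Fin n) (Fin n) ℝ | Q * Qᵀ = 1 ∧ Q.det = -1} with hSm
  have hpne : Sp.Nonempty := ⟨1, ⟨by simp, Matrix.det_one⟩⟩
  have hmne : Sm.Nonempty := by
    refine ⟨Matrix.diagonal (fun i => if i = 0 then (-1:ℝ) else 1), ?_, ?_⟩
    · rw [Matrix.diagonal_transpose, Matrix.diagonal_mul_diagonal]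
      ext i j
      by_cases h : i = j
      · subst h
        by_cases h0 : i = 0 <;> simp [Matrix.diagonal_apply, Matrix.one_apply, h0]
      · simp [Matrix.diagonal_apply, Matrix.one_apply, h]
    · rw [Matrix.det_diagonal]
      rw [show (Finset.univ : Finset (Fin n)) = insert 0 (Finset.univ.erase 0) by
        simp [Finset.insert_erase]]
      rw [Finset.prod_insert (Finset.notMem_erase _ _)]
      rw [Finset.prod_eq_one (fun i hi => by simp [Finset.ne_of_mem_erase hi])]
      norm_num
  refine le_of_forall_pos_le_add ?_
  intro ε hε
  obtain ⟨q₁, hq₁, hd₁⟩ := (Metric.infDist_lt_iff hpne).mp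
    (show Metric.infDist A Sp < rhoPlus A + ε/2 by simp [rhoPlus, hSp]; linarith)
  obtain ⟨q₂, hq₂, hd₂⟩ := (Metric.infDist_lt_iff hmne).mp
    (show Metric.infDist A Sm < rhoMinus A + ε/2 by simp [rhoMinus, hSm]; linarith)
  have hkey := key hq₁.1 hq₁.2 hq₂.1 hq₂.2
  have htri : dist q₁ q₂ ≤ dist A q₁ + dist A q₂ := by
    rw [dist_comm A q₁]; exact dist_triangle _ _ _
  linarith
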